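/- arXiv:1903.08520 — 6 statements merged into one kernel-verified Lean document; each statement's English description precedes it below -/
import Mathlib

section
/- Let n ≥ 1, 2 < p < ∞, let Ω ⊆ ℝⁿ be open, T > 0, and let v : ℝⁿ × ℝ → ℝ be of class C^{2,1} on Ω × (0,T) (continuous spatial gradient and spatial Hessian, and continuous time derivative). Then for every (x,t) ∈ Ω × (0,T), as ε → 0⁺ one has the asymptotic mean value formula: (n+2)/(p+n) · ⨍_{B_ε(x)} v(y, t−ε²) dy + (p−2)/(p+n) · sup_{|σ|=1} [v(x+εσ, t−ε²) + v(x−εσ, t−ε²)]/2 = v(x,t) + (ε²/(2(n+p))) · (Δv(x,t) + (p−2)·sup_{|σ|=1}⟨D²v(x,t)σ,σ⟩ − 2(n+p)·∂_t v(x,t)) + o(ε²). -/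
/-!
Write `P(z) = v(x,t) - ε² ∂ₜv(x,t) + ⟨∇v, z⟩ + ½ ⟨D²v z, z⟩`. A second-order Taylor expansion in
space and a mean value argument in time (using continuity of `∂ₜv` at `(x,t)`) give
`v(x + z, t - ε²) = P(z) + o(ε²)` uniformly in `‖z‖ ≤ ε`. Averages and suprema move a uniform
`o(ε²)` error by at most `o(ε²)`, so it suffices to evaluate both operators on `P`:
* over the ball, the linear term and the mixed moments `z_i z_j` (`i ≠ j`) average to zero by
  reflection symmetry, and each `z_i²` averages to `ε²/(n+2)`, so the average is
  `v - ε² ∂ₜv + ε² Δv / (2(n+2))`;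
* the symmetric sum `(P(εσ) + P(-εσ))/2` kills the linear term, leaving
  `v - ε² ∂ₜv + ε²/2 ⟨D²v σ, σ⟩`, whose supremum over `σ` is `v - ε² ∂ₜv + ε²/2 λ_max(D²v)`.
The weights `(n+2)/(n+p)` and `(p-2)/(n+p)` then combine these into the stated expansion.
-/

open MeasureTheory Metric Set Filter Asymptotics Topology
open scoped ENNReal

theorem ContinuousOn.integrableOn_ball {E : Type*} [NormedAddCommGroup E] [ProperSpace E]
    [MeasurableSpace E] [OpensMeasurableSpace E] {μ : Measure E} [IsFiniteMeasureOnCompacts μ]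
    {f : E → ℝ} {x : E} {ε : ℝ} (hf : ContinuousOn f (closedBall x ε)) :
    IntegrableOn f (ball x ε) μ :=
  (hf.integrableOn_compact (isCompact_closedBall x ε)).mono_set ball_subset_closedBall

section BallMoments

variable {ι : Type*} [Fintype ι]

theorem setIntegral_ball_comp_sub (f : EuclideanSpace ℝ ι → ℝ) (x : EuclideanSpace ℝ ι) (ε : ℝ) :
    ∫ y in ball x ε, f (y - x) = ∫ z in ball 0 ε, f z := by
  have hpre : (· - x) ⁻¹' ball (0 : EuclideanSpace ℝ ι) ε = ball x ε := by
    ext y; simp [dist_eq_norm]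
  rw [← (measurePreserving_sub_right volume x).setIntegral_preimage_emb
    (Homeomorph.subRight x).measurableEmbedding f, hpre]

theorem setIntegral_ball_zero_comp_linearIsometryEquiv
    (e : EuclideanSpace ℝ ι ≃ₗᵢ[ℝ] EuclideanSpace ℝ ι) (g : EuclideanSpace ℝ ι → ℝ) (ε : ℝ) :
    ∫ z in ball 0 ε, g (e z) = ∫ z in ball 0 ε, g z := by
  rw [← e.measurePreserving.setIntegral_preimage_emb e.toHomeomorph.measurableEmbedding g,
    e.preimage_ball, e.symm.map_zero]

theorem setIntegral_ball_zero_continuousLinearMap (L : EuclideanSpace ℝ ι →L[ℝ] ℝ) (ε : ℝ) :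
    ∫ z in ball 0 ε, L z = 0 := by
  have h := setIntegral_ball_zero_comp_linearIsometryEquiv (LinearIsometryEquiv.neg ℝ) (L ·) ε
  simp only [LinearIsometryEquiv.coe_neg, map_neg, integral_neg] at h
  linarith

theorem setIntegral_ball_zero_norm_sq [Nonempty ι] {ε : ℝ} (hε : 0 ≤ ε) :
    ∫ z in ball (0 : EuclideanSpace ℝ ι) ε, ‖z‖ ^ 2 =
      Fintype.card ι * ε ^ 2 / (Fintype.card ι + 2) *
        volume.real (ball (0 : EuclideanSpace ℝ ι) ε) := by
  set n := Fintype.card ι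
  have hn : n ≠ 0 := Fintype.card_ne_zero
  have hdim : Module.finrank ℝ (EuclideanSpace ℝ ι) = n := by simp [n]
  have hind : (ball (0 : EuclideanSpace ℝ ι) ε).indicator (‖·‖ ^ 2) =
      fun z => (Iio ε).indicator (· ^ 2) ‖z‖ := by
    ext z
    by_cases h : ‖z‖ < ε <;> simp [h]
  have hradial : ∀ r : ℝ, r ^ (n - 1) • (Iio ε).indicator (· ^ 2) r =
      (Iio ε).indicator (· ^ (n + 1)) r := by
    intro r
    by_cases h : r < ε
    · simp only [Set.indicator_of_mem (show r ∈ Iio ε from h), smul_eq_mul, ← pow_add]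
      congr 1; omega
    · simp [Set.indicator_of_notMem (show r ∉ Iio ε from h)]
  rw [← integral_indicator measurableSet_ball, hind, integral_fun_norm_addHaar, hdim]
  simp only [hradial]
  rw [integral_indicator measurableSet_Iio, Measure.restrict_restrict measurableSet_Iio,
    Iio_inter_Ioi, ← integral_Ioc_eq_integral_Ioo, ← intervalIntegral.integral_of_le hε,
    integral_pow,
    ← Measure.addHaar_real_closedBall_eq_addHaar_real_ball volume (0 : EuclideanSpace ℝ ι) ε,
    Measure.addHaar_real_closedBall _ _ hε, hdim]
  simp only [nsmul_eq_mul, smul_eq_mul]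
  push_cast
  field_simp
  ring

variable [DecidableEq ι]

theorem setIntegral_ball_zero_coord_mul_coord_of_ne {i j : ι} (hij : j ≠ i)
    (ε : ℝ) : ∫ z in ball (0 : EuclideanSpace ℝ ι) ε, z i * z j = 0 := by
  let reflect : EuclideanSpace ℝ ι ≃ₗᵢ[ℝ] EuclideanSpace ℝ ι :=
    LinearIsometryEquiv.piLpCongrRight 2
      (fun k => if k = i then LinearIsometryEquiv.neg ℝ else LinearIsometryEquiv.refl ℝ ℝ)
  have h := setIntegral_ball_zero_comp_linearIsometryEquiv reflect (fun z => z i * z j) ε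
  simp only [reflect, LinearIsometryEquiv.piLpCongrRight_apply, if_pos, if_neg hij,
    LinearIsometryEquiv.coe_neg, LinearIsometryEquiv.coe_refl, id, neg_mul,
    integral_neg] at h
  linarith

theorem setIntegral_ball_zero_sq_coord_eq (i j : ι) (ε : ℝ) :
    ∫ z in ball (0 : EuclideanSpace ℝ ι) ε, z i ^ 2 =
      ∫ z in ball (0 : EuclideanSpace ℝ ι) ε, z j ^ 2 := by
  have h := setIntegral_ball_zero_comp_linearIsometryEquiv
    (LinearIsometryEquiv.piLpCongrLeft 2 ℝ ℝ (Equiv.swap i j)) (fun z => z i ^ 2) ε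
  simp only [LinearIsometryEquiv.piLpCongrLeft_apply, Equiv.piCongrLeft'_apply, Equiv.symm_swap,
    Equiv.swap_apply_left] at h
  exact h.symm

theorem setIntegral_ball_zero_sq_coord [Nonempty ι] (i : ι) {ε : ℝ} (hε : 0 ≤ ε) :
    ∫ z in ball (0 : EuclideanSpace ℝ ι) ε, z i ^ 2 =
      ε ^ 2 / (Fintype.card ι + 2) * volume.real (ball (0 : EuclideanSpace ℝ ι) ε) := by
  have hint : ∀ j : ι, IntegrableOn (fun z : EuclideanSpace ℝ ι => z j ^ 2) (ball 0 ε) :=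
    fun j => ((EuclideanSpace.proj j).continuous.pow 2).continuousOn.integrableOn_ball
  have hsum : ∑ j : ι, ∫ z in ball (0 : EuclideanSpace ℝ ι) ε, z j ^ 2 =
      ∫ z in ball (0 : EuclideanSpace ℝ ι) ε, ‖z‖ ^ 2 := by
    rw [← integral_finsetSum _ fun j _ => hint j]
    simp only [EuclideanSpace.norm_sq_eq, Real.norm_eq_abs, sq_abs]
  simp only [setIntegral_ball_zero_sq_coord_eq _ i, Finset.sum_const, Finset.card_univ,
    nsmul_eq_mul, setIntegral_ball_zero_norm_sq hε] at hsum
  have hn : (Fintype.card ι : ℝ) ≠ 0 := Nat.cast_ne_zero.mpr Fintype.card_ne_zero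
  field_simp at hsum ⊢
  linarith

theorem bilinear_apply_self_eq_sum (H : EuclideanSpace ℝ ι →L[ℝ] EuclideanSpace ℝ ι →L[ℝ] ℝ)
    (z : EuclideanSpace ℝ ι) :
    H z z =
      ∑ i, ∑ j, H (EuclideanSpace.single i 1) (EuclideanSpace.single j 1) * (z i * z j) := by
  have hz : z = ∑ i, z i • EuclideanSpace.single i (1 : ℝ) := by
    simpa using ((EuclideanSpace.basisFun ι ℝ).sum_repr z).symm
  conv_lhs => rw [hz]
  simp only [map_sum, map_smul, FunLike.coe_sum, Finset.sum_apply, FunLike.coe_smul,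
    Pi.smul_apply, smul_eq_mul, Finset.mul_sum]
  rw [Finset.sum_comm]
  exact Finset.sum_congr rfl fun i _ => Finset.sum_congr rfl fun j _ => by ring

theorem setIntegral_ball_zero_bilinear [Nonempty ι]
    (H : EuclideanSpace ℝ ι →L[ℝ] EuclideanSpace ℝ ι →L[ℝ] ℝ) {ε : ℝ} (hε : 0 ≤ ε) :
    ∫ z in ball (0 : EuclideanSpace ℝ ι) ε, H z z =
      ε ^ 2 / (Fintype.card ι + 2) *
        (∑ i, H (EuclideanSpace.single i 1) (EuclideanSpace.single i 1)) *
        volume.real (ball (0 : EuclideanSpace ℝ ι) ε) := by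
  have hint : ∀ i j : ι, IntegrableOn (fun z : EuclideanSpace ℝ ι => z i * z j) (ball 0 ε) :=
    fun i j => ((EuclideanSpace.proj i).continuous.mul
      (EuclideanSpace.proj j).continuous).continuousOn.integrableOn_ball
  calc ∫ z in ball (0 : EuclideanSpace ℝ ι) ε, H z z
      = ∑ i, ∑ j, H (EuclideanSpace.single i 1) (EuclideanSpace.single j 1) *
          ∫ z in ball (0 : EuclideanSpace ℝ ι) ε, z i * z j := by
        simp_rw [bilinear_apply_self_eq_sum H]
        rw [integral_finsetSum _ fun i _ =>
          integrable_finsetSum _ fun j _ => (hint i j).const_mul _]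
        refine Finset.sum_congr rfl fun i _ => ?_
        rw [integral_finsetSum _ fun j _ => (hint i j).const_mul _]
        simp only [integral_const_mul]
    _ = ∑ i, H (EuclideanSpace.single i 1) (EuclideanSpace.single i 1) *
          ∫ z in ball (0 : EuclideanSpace ℝ ι) ε, z i ^ 2 := by
        refine Finset.sum_congr rfl fun i _ => ?_
        rw [Finset.sum_eq_single i (fun j _ hj => by
          rw [setIntegral_ball_zero_coord_mul_coord_of_ne hj, mul_zero]) (by simp)]
        simp only [sq]
    _ = _ := by
        simp only [setIntegral_ball_zero_sq_coord _ hε, Finset.mul_sum, Finset.sum_mul]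
        exact Finset.sum_congr rfl fun i _ => by ring

theorem setAverage_ball_quadratic [Nonempty ι] (a : ℝ) (L : EuclideanSpace ℝ ι →L[ℝ] ℝ)
    (H : EuclideanSpace ℝ ι →L[ℝ] EuclideanSpace ℝ ι →L[ℝ] ℝ) (x : EuclideanSpace ℝ ι)
    {ε : ℝ} (hε : 0 < ε) :
    ⨍ y in ball x ε, (a + L (y - x) + H (y - x) (y - x) / 2) =
      a + ε ^ 2 / (2 * (Fintype.card ι + 2)) *
        ∑ i, H (EuclideanSpace.single i 1) (EuclideanSpace.single i 1) := by
  have hL : IntegrableOn (fun z : EuclideanSpace ℝ ι => L z) (ball 0 ε) :=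
    L.continuous.continuousOn.integrableOn_ball
  have ha : IntegrableOn (fun _ : EuclideanSpace ℝ ι => a) (ball 0 ε) :=
    integrableOn_const measure_ball_lt_top.ne
  have haL : IntegrableOn (fun z : EuclideanSpace ℝ ι => a + L z) (ball 0 ε) := ha.add hL
  have hH : IntegrableOn (fun z : EuclideanSpace ℝ ι => H z z / 2) (ball 0 ε) :=
    Continuous.continuousOn (by fun_prop) |>.integrableOn_ball
  have hvol : volume.real (ball (0 : EuclideanSpace ℝ ι) ε) ≠ 0 :=
    ENNReal.toReal_ne_zero.mpr ⟨(measure_ball_pos volume 0 hε).ne', measure_ball_lt_top.ne⟩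
  rw [setAverage_eq, Measure.addHaar_real_ball_center,
    setIntegral_ball_comp_sub (fun z => a + L z + H z z / 2),
    integral_add haL hH, integral_add ha hL, setIntegral_const,
    setIntegral_ball_zero_continuousLinearMap, integral_div,
    setIntegral_ball_zero_bilinear H hε.le, smul_eq_mul, smul_eq_mul]
  field_simp
  ring

end BallMoments

section ParabolicTaylor

variable {E : Type*}

theorem eventually_nhdsGT_forall_mem_of_mem_nhds [SeminormedAddCommGroup E] {U : Set (E × ℝ)}
    {x : E} {t : ℝ} (hU : U ∈ 𝓝 (x, t)) :
    ∀ᶠ ε in 𝓝[>] (0 : ℝ), ∀ z : E, ‖z‖ ≤ ε → ∀ s ∈ Icc (t - ε ^ 2) t, (x + z, s) ∈ U := by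
  obtain ⟨ρ, hρ, hball⟩ := Metric.mem_nhds_iff.1 hU
  filter_upwards [Ioo_mem_nhdsGT (lt_min hρ one_pos)] with ε hε z hz s hs
  have hε1 : ε < 1 := hε.2.trans_le (min_le_right _ _)
  have hερ : ε < ρ := hε.2.trans_le (min_le_left _ _)
  have hsq : ε ^ 2 < ε := by nlinarith [hε.1]
  refine hball ?_
  rw [mem_ball, Prod.dist_eq]
  refine max_lt ?_ ?_
  · rw [dist_eq_norm, add_sub_cancel_left]
    exact hz.trans_lt hερ
  · rw [Real.dist_eq, abs_sub_comm, abs_of_nonneg (by linarith [hs.2])]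
    linarith [hs.1]

theorem eventually_abs_time_increment_le [SeminormedAddCommGroup E] {v : E × ℝ → ℝ} {x : E}
    {t : ℝ}
    (hdiff : ∀ᶠ q in 𝓝 (x, t), DifferentiableAt ℝ (fun s => v (q.1, s)) q.2)
    (hcont : ContinuousAt (fun q : E × ℝ => deriv (fun s => v (q.1, s)) q.2) (x, t))
    {η : ℝ} (hη : 0 < η) :
    ∀ᶠ ε in 𝓝[>] (0 : ℝ), ∀ z : E, ‖z‖ ≤ ε →
      |v (x + z, t - ε ^ 2) - v (x + z, t) + ε ^ 2 * deriv (fun s => v (x, s)) t| ≤ η * ε ^ 2 := by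
  set c := deriv (fun s => v (x, s)) t
  have hnear : ∀ᶠ q in 𝓝 (x, t), DifferentiableAt ℝ (fun s => v (q.1, s)) q.2 ∧
      ‖deriv (fun s => v (q.1, s)) q.2 - c‖ ≤ η :=
    hdiff.and (hcont.eventually (closedBall_mem_nhds c hη))
  filter_upwards [eventually_nhdsGT_forall_mem_of_mem_nhds hnear] with ε hε z hz
  have hderiv : ∀ s ∈ Icc (t - ε ^ 2) t, HasDerivWithinAt (fun s => v (x + z, s) - c * s)
      (deriv (fun s => v (x + z, s)) s - c) (Icc (t - ε ^ 2) t) s := fun s hs => by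
    have h := (hε z hz s hs).1.hasDerivAt.sub ((hasDerivAt_id s).const_mul c)
    rw [mul_one] at h
    exact h.hasDerivWithinAt
  have hmvt := norm_image_sub_le_of_norm_deriv_le_segment' hderiv
    (fun s hs => (hε z hz s (Ico_subset_Icc_self hs)).2) t
    (right_mem_Icc.2 (by linarith [sq_nonneg ε]))
  rw [Real.norm_eq_abs, abs_sub_comm] at hmvt
  convert hmvt using 2 <;> ring

variable [NormedAddCommGroup E] [NormedSpace ℝ E]

theorem taylor_two_isLittleO {g : E → ℝ} {x : E} (hg : ∀ᶠ y in 𝓝 x, DifferentiableAt ℝ g y)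
    (hg' : DifferentiableAt ℝ (fderiv ℝ g) x) :
    (fun z => g (x + z) - g x - fderiv ℝ g x z - fderiv ℝ (fderiv ℝ g) x z z / 2)
      =o[𝓝 0] fun z => ‖z‖ ^ 2 := by
  set L := fderiv ℝ g x
  set H := fderiv ℝ (fderiv ℝ g) x
  refine isLittleO_iff.2 fun η hη => ?_
  have hnear : ∀ᶠ y in 𝓝 x,
      DifferentiableAt ℝ g y ∧ ‖fderiv ℝ g y - L - H (y - x)‖ ≤ η * ‖y - x‖ :=
    hg.and (isLittleO_iff.1 hg'.hasFDerivAt.isLittleO hη)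
  obtain ⟨δ, hδ, hball⟩ := Metric.eventually_nhds_iff_ball.1 hnear
  filter_upwards [ball_mem_nhds (0 : E) hδ] with z hz
  have hseg : ∀ s ∈ Icc (0 : ℝ) 1, x + s • z ∈ ball x δ := fun s hs => by
    rw [mem_ball_zero_iff] at hz
    rw [mem_ball_iff_norm, add_sub_cancel_left, norm_smul, Real.norm_of_nonneg hs.1]
    exact (mul_le_of_le_one_left (norm_nonneg z) hs.2).trans_lt hz
  let F : ℝ → ℝ := fun s => g (x + s • z) - s * L z - s ^ 2 / 2 * H z z
  have hF : ∀ s ∈ Icc (0 : ℝ) 1,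
      HasDerivWithinAt F ((fderiv ℝ g (x + s • z) - L - H (s • z)) z) (Icc 0 1) s := by
    intro s hs
    have hline : HasDerivAt (fun s : ℝ => x + s • z) z s := by
      simpa using ((hasDerivAt_id s).smul_const z).const_add x
    have := (((hball _ (hseg s hs)).1.hasFDerivAt.comp_hasDerivAt s hline).sub
      (hasDerivAt_mul_const (L z))).sub ((hasDerivAt_pow 2 s).div_const 2 |>.mul_const (H z z))
    refine HasDerivAt.hasDerivWithinAt ?_
    convert this using 1
    · rfl
    · simp [map_smul]
  have hbound : ∀ s ∈ Ico (0 : ℝ) 1,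
      ‖(fderiv ℝ g (x + s • z) - L - H (s • z)) z‖ ≤ η * ‖z‖ ^ 2 := by
    intro s hs
    have hsz : ‖s • z‖ ≤ ‖z‖ := by
      rw [norm_smul, Real.norm_of_nonneg hs.1]
      exact mul_le_of_le_one_left (norm_nonneg z) hs.2.le
    have hnear := (hball _ (hseg s (Ico_subset_Icc_self hs))).2
    rw [add_sub_cancel_left] at hnear
    calc ‖(fderiv ℝ g (x + s • z) - L - H (s • z)) z‖
        ≤ ‖fderiv ℝ g (x + s • z) - L - H (s • z)‖ * ‖z‖ := ContinuousLinearMap.le_opNorm _ _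
      _ ≤ η * ‖z‖ * ‖z‖ := by gcongr; exact hnear.trans (by gcongr)
      _ = η * ‖z‖ ^ 2 := by ring
  have hmvt :=
    norm_image_sub_le_of_norm_deriv_le_segment' hF hbound 1 (right_mem_Icc.2 zero_le_one)
  simp only [F, one_smul, zero_smul, add_zero, one_mul, zero_mul, sub_zero, one_pow,
    ne_eq, OfNat.ofNat_ne_zero, not_false_eq_true, zero_pow, zero_div, mul_one] at hmvt
  rw [Real.norm_of_nonneg (sq_nonneg _)]
  rwa [show g (x + z) - g x - L z - H z z / 2 = g (x + z) - L z - 1 / 2 * H z z - g x by ring]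

theorem eventually_abs_parabolic_taylor_le {v : E × ℝ → ℝ} {x : E} {t : ℝ}
    (hspace : ∀ᶠ y in 𝓝 x, DifferentiableAt ℝ (fun y => v (y, t)) y)
    (hhess : DifferentiableAt ℝ (fderiv ℝ (fun y => v (y, t))) x)
    (htime : ∀ᶠ q in 𝓝 (x, t), DifferentiableAt ℝ (fun s => v (q.1, s)) q.2)
    (htimeCont : ContinuousAt (fun q : E × ℝ => deriv (fun s => v (q.1, s)) q.2) (x, t))
    {η : ℝ} (hη : 0 < η) :
    ∀ᶠ ε in 𝓝[>] (0 : ℝ), ∀ z : E, ‖z‖ ≤ ε →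
      |v (x + z, t - ε ^ 2) - (v (x, t) - ε ^ 2 * deriv (fun s => v (x, s)) t +
        fderiv ℝ (fun y => v (y, t)) x z + fderiv ℝ (fderiv ℝ (fun y => v (y, t))) x z z / 2)|
        ≤ η * ε ^ 2 := by
  set c := deriv (fun s => v (x, s)) t
  set L := fderiv ℝ (fun y => v (y, t)) x
  set H := fderiv ℝ (fderiv ℝ (fun y => v (y, t))) x
  set R : E → ℝ := fun z => v (x + z, t) - v (x, t) - L z - H z z / 2
  have hR : ∀ᶠ z in 𝓝 0, ‖R z‖ ≤ η / 2 * ‖‖z‖ ^ 2‖ :=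
    isLittleO_iff.1 (taylor_two_isLittleO hspace hhess) (half_pos hη)
  have hR' : ∀ᶠ q : E × ℝ in 𝓝 (x, t), ‖R (q.1 - x)‖ ≤ η / 2 * ‖‖q.1 - x‖ ^ 2‖ :=
    ((continuous_fst.sub continuous_const).tendsto' (x, t) 0 (sub_self x)).eventually hR
  filter_upwards [eventually_nhdsGT_forall_mem_of_mem_nhds hR',
    eventually_abs_time_increment_le htime htimeCont (half_pos hη)] with ε hspace htime z hz
  have hsp := hspace z hz t ⟨by linarith [sq_nonneg ε], le_rfl⟩
  simp only [add_sub_cancel_left, Real.norm_eq_abs, abs_pow, abs_norm] at hsp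
  have hz2 : η / 2 * ‖z‖ ^ 2 ≤ η / 2 * ε ^ 2 := by gcongr
  calc _ = |(v (x + z, t - ε ^ 2) - v (x + z, t) + ε ^ 2 * c) + R z| := by
        congr 1; simp only [R]; ring
    _ ≤ |v (x + z, t - ε ^ 2) - v (x + z, t) + ε ^ 2 * c| + |R z| := abs_add_le _ _
    _ ≤ η * ε ^ 2 := by linarith [htime z hz]

end ParabolicTaylor

section UniformApproximation

variable {α : Type*} {l : Filter α} {g : α → ℝ}

theorem abs_setAverage_le {β : Type*} [MeasurableSpace β] {μ : Measure β} {s : Set β}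
    {f : β → ℝ} {C : ℝ} (hs : μ s ≠ ∞) (hC : 0 ≤ C) (hf : ∀ y ∈ s, |f y| ≤ C) :
    |⨍ y in s, f y ∂μ| ≤ C := by
  rw [setAverage_eq, smul_eq_mul, abs_mul, abs_inv, abs_of_nonneg measureReal_nonneg]
  rcases (measureReal_nonneg (μ := μ) (s := s)).eq_or_lt with hzero | hpos
  · simp [← hzero, hC]
  calc (μ.real s)⁻¹ * |∫ y in s, f y ∂μ| ≤ (μ.real s)⁻¹ * (C * μ.real s) := by
        gcongr
        exact norm_setIntegral_le_of_norm_le_const hs.lt_top fun y hy =>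
          (Real.norm_eq_abs _).trans_le (hf y hy)
    _ = C := by field_simp

theorem isLittleO_setAverage_sub_setAverage {β : Type*} [MeasurableSpace β] {μ : Measure β}
    {s : α → Set β} {F G : α → β → ℝ} (hs : ∀ a, μ (s a) ≠ ∞)
    (hF : ∀ᶠ a in l, IntegrableOn (F a) (s a) μ) (hG : ∀ᶠ a in l, IntegrableOn (G a) (s a) μ)
    (hFG : ∀ η > 0, ∀ᶠ a in l, ∀ y ∈ s a, |F a y - G a y| ≤ η * ‖g a‖) :
    (fun a => ⨍ y in s a, F a y ∂μ - ⨍ y in s a, G a y ∂μ) =o[l] g := by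
  refine isLittleO_iff.2 fun η hη => ?_
  filter_upwards [hF, hG, hFG η hη] with a hFa hGa hFGa
  rw [Real.norm_eq_abs, setAverage_eq, setAverage_eq, ← smul_sub, ← integral_sub hFa hGa,
    ← setAverage_eq]
  exact abs_setAverage_le (hs a) (by positivity) hFGa

theorem abs_ciSup_sub_ciSup_le {ι : Sort*} [Nonempty ι] {f h : ι → ℝ} {C : ℝ}
    (hh : BddAbove (range h)) (hfh : ∀ i, |f i - h i| ≤ C) :
    |(⨆ i, f i) - ⨆ i, h i| ≤ C := by
  have hf : BddAbove (range f) := ⟨(⨆ i, h i) + C, by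
    rintro _ ⟨i, rfl⟩
    linarith [le_ciSup hh i, (abs_le.1 (hfh i)).2]⟩
  rw [abs_le]
  constructor
  · have : (⨆ i, h i) ≤ (⨆ i, f i) + C :=
      ciSup_le fun i => by linarith [le_ciSup hf i, (abs_le.1 (hfh i)).1]
    linarith
  · have : (⨆ i, f i) ≤ (⨆ i, h i) + C :=
      ciSup_le fun i => by linarith [le_ciSup hh i, (abs_le.1 (hfh i)).2]
    linarith

theorem isLittleO_ciSup_sub_ciSup {ι : Sort*} [Nonempty ι] {F G : α → ι → ℝ}
    (hG : ∀ a, BddAbove (range (G a)))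
    (hFG : ∀ η > 0, ∀ᶠ a in l, ∀ i, |F a i - G a i| ≤ η * ‖g a‖) :
    (fun a => (⨆ i, F a i) - ⨆ i, G a i) =o[l] g :=
  isLittleO_iff.2 fun η hη => (hFG η hη).mono fun a ha => abs_ciSup_sub_ciSup_le (hG a) ha

end UniformApproximation

theorem isLittleO_setAverage_ball_sub_taylor {ι : Type*} [Fintype ι] [DecidableEq ι]
    [Nonempty ι]
    {u : ℝ → EuclideanSpace ℝ ι → ℝ} {a : ℝ → ℝ} {L : EuclideanSpace ℝ ι →L[ℝ] ℝ}
    {H : EuclideanSpace ℝ ι →L[ℝ] EuclideanSpace ℝ ι →L[ℝ] ℝ} {x : EuclideanSpace ℝ ι}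
    (hint : ∀ᶠ ε in 𝓝[>] (0 : ℝ), IntegrableOn (u ε) (ball x ε))
    (hu : ∀ η > 0, ∀ᶠ ε in 𝓝[>] (0 : ℝ), ∀ z, ‖z‖ ≤ ε →
      |u ε (x + z) - (a ε + L z + H z z / 2)| ≤ η * ε ^ 2) :
    (fun ε => (⨍ y in ball x ε, u ε y) - (a ε + ε ^ 2 / (2 * (Fintype.card ι + 2)) *
        ∑ i, H (EuclideanSpace.single i 1) (EuclideanSpace.single i 1)))
      =o[𝓝[>] (0 : ℝ)] fun ε => ε ^ 2 := by
  have hG : ∀ ε, IntegrableOn (fun y => a ε + L (y - x) + H (y - x) (y - x) / 2) (ball x ε) :=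
    fun ε => Continuous.continuousOn (by fun_prop) |>.integrableOn_ball
  refine (isLittleO_setAverage_sub_setAverage (fun _ => measure_ball_lt_top.ne) hint
    (Eventually.of_forall hG) fun η hη => ?_).congr' ?_ EventuallyEq.rfl
  · filter_upwards [hu η hη] with ε hε y hy
    rw [Real.norm_of_nonneg (sq_nonneg ε)]
    simpa only [add_sub_cancel] using
      hε (y - x) (by rw [← dist_eq_norm]; exact (mem_ball.1 hy).le)
  · filter_upwards [self_mem_nhdsWithin] with ε hε
    rw [setAverage_ball_quadratic _ _ _ _ hε]

section SphereAverage

variable {E : Type*} [NormedAddCommGroup E] [NormedSpace ℝ E]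

theorem bddAbove_range_apply_apply_sphere (H : E →L[ℝ] E →L[ℝ] ℝ) :
    BddAbove (range fun σ : sphere (0 : E) 1 => H σ σ) := by
  refine ⟨‖H‖, ?_⟩
  rintro _ ⟨σ, rfl⟩
  have hσ : ‖(σ : E)‖ = 1 := mem_sphere_zero_iff_norm.1 σ.2
  simpa [hσ] using (le_abs_self _).trans (H.le_opNorm₂ σ σ)

theorem isLittleO_iSup_sphere_sub_taylor [Nontrivial E] {u : ℝ → E → ℝ} {a : ℝ → ℝ}
    {L : E →L[ℝ] ℝ} {H : E →L[ℝ] E →L[ℝ] ℝ} {x : E}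
    (hu : ∀ η > 0, ∀ᶠ ε in 𝓝[>] (0 : ℝ), ∀ z, ‖z‖ ≤ ε →
      |u ε (x + z) - (a ε + L z + H z z / 2)| ≤ η * ε ^ 2) :
    (fun ε => (⨆ σ : sphere (0 : E) 1, (u ε (x + ε • (σ : E)) + u ε (x - ε • (σ : E))) / 2) -
        (a ε + ε ^ 2 / 2 * ⨆ σ : sphere (0 : E) 1, H σ σ))
      =o[𝓝[>] (0 : ℝ)] fun ε => ε ^ 2 := by
  have : Nonempty (sphere (0 : E) 1) := (NormedSpace.sphere_nonempty.2 zero_le_one).to_subtype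
  have hG : ∀ ε, BddAbove (range fun σ : sphere (0 : E) 1 => ε ^ 2 / 2 * H σ σ) := fun ε =>
    (bddAbove_range_apply_apply_sphere H).range_comp_left (monotone_id.const_mul (by positivity))
  refine (isLittleO_ciSup_sub_ciSup
    (F := fun ε (σ : sphere (0 : E) 1) => (u ε (x + ε • (σ : E)) + u ε (x - ε • (σ : E))) / 2)
    (G := fun ε (σ : sphere (0 : E) 1) => a ε + ε ^ 2 / 2 * H σ σ)
    (fun ε => (hG ε).range_comp_left (monotone_id.const_add (a ε)))
    fun η hη => ?_).congr' ?_ EventuallyEq.rfl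
  · filter_upwards [hu η hη, self_mem_nhdsWithin] with ε hε hεpos σ
    have hσ : ‖ε • (σ : E)‖ ≤ ε := by
      rw [norm_smul, Real.norm_of_nonneg hεpos.out.le, mem_sphere_zero_iff_norm.1 σ.2, mul_one]
    have h₁ := abs_le.1 (hε _ hσ)
    have h₂ := abs_le.1 (hε (-(ε • (σ : E))) (by rwa [norm_neg]))
    simp only [← sub_eq_add_neg, map_neg, neg_apply, map_smul, smul_apply, smul_eq_mul] at h₁ h₂
    rw [Real.norm_of_nonneg (sq_nonneg ε), abs_le]
    constructor <;> linarith
  · filter_upwards with ε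
    rw [Real.mul_iSup_of_nonneg (by positivity), add_ciSup (hG ε)]

end SphereAverage

theorem asymptotic_mean_value_formula_general
    (n : ℕ) (hn : 1 ≤ n) (p : ℝ) (hp : 2 < p)
    (Ω : Set (EuclideanSpace ℝ (Fin n))) (hΩ : IsOpen Ω) (T : ℝ)
    (v : EuclideanSpace ℝ (Fin n) × ℝ → ℝ)
    (hvCont : ContinuousOn v (Ω ×ˢ Ioo 0 T))
    (hSpDiff : ∀ x ∈ Ω, ∀ t ∈ Ioo (0:ℝ) T,
      DifferentiableAt ℝ (fun y => v (y, t)) x ∧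
      DifferentiableAt ℝ (fderiv ℝ (fun y => v (y, t))) x)
    (hTimeDiff : ∀ x ∈ Ω, ∀ t ∈ Ioo (0:ℝ) T, DifferentiableAt ℝ (fun s => v (x, s)) t)
    (hTimeCont : ContinuousOn
      (fun q : EuclideanSpace ℝ (Fin n) × ℝ => deriv (fun s => v (q.1, s)) q.2)
      (Ω ×ˢ Ioo 0 T))
    (x : EuclideanSpace ℝ (Fin n)) (hx : x ∈ Ω) (t : ℝ) (ht : t ∈ Ioo (0:ℝ) T) :
    (fun ε : ℝ =>
      (((n : ℝ) + 2) / (p + n)) * (⨍ y in ball x ε, v (y, t - ε ^ 2)) +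
      ((p - 2) / (p + n)) *
        (⨆ σ : sphere (0 : EuclideanSpace ℝ (Fin n)) 1,
          (v (x + ε • (σ : EuclideanSpace ℝ (Fin n)), t - ε ^ 2) +
           v (x - ε • (σ : EuclideanSpace ℝ (Fin n)), t - ε ^ 2)) / 2) -
      (v (x, t) + ε ^ 2 / (2 * ((n : ℝ) + p)) *
        ((∑ i : Fin n, fderiv ℝ (fderiv ℝ (fun y => v (y, t))) x
            (EuclideanSpace.single i 1) (EuclideanSpace.single i 1)) +
         (p - 2) *
          (⨆ σ : sphere (0 : EuclideanSpace ℝ (Fin n)) 1,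
            fderiv ℝ (fderiv ℝ (fun y => v (y, t))) x
              (σ : EuclideanSpace ℝ (Fin n)) (σ : EuclideanSpace ℝ (Fin n))) -
         2 * ((n : ℝ) + p) * deriv (fun s => v (x, s)) t)))
      =o[𝓝[>] (0 : ℝ)] (fun ε => ε ^ 2) := by
  have : NeZero n := ⟨by omega⟩
  have hcyl : Ω ×ˢ Ioo 0 T ∈ 𝓝 (x, t) := (hΩ.prod isOpen_Ioo).mem_nhds ⟨hx, ht⟩
  have htaylor := fun η (hη : 0 < η) => eventually_abs_parabolic_taylor_le
    (eventually_of_mem (hΩ.mem_nhds hx) fun y hy => (hSpDiff y hy t ht).1) (hSpDiff x hx t ht).2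
    (eventually_of_mem hcyl fun q hq => hTimeDiff q.1 hq.1 q.2 hq.2)
    (hTimeCont.continuousAt hcyl) hη
  have hint : ∀ᶠ ε in 𝓝[>] (0 : ℝ), IntegrableOn (fun y => v (y, t - ε ^ 2)) (ball x ε) := by
    filter_upwards [eventually_nhdsGT_forall_mem_of_mem_nhds hcyl] with ε hε
    refine (hvCont.comp (by fun_prop : Continuous fun y => (y, t - ε ^ 2)).continuousOn
      fun y hy => ?_).integrableOn_ball
    simpa using hε (y - x) (by rwa [← dist_eq_norm]) (t - ε ^ 2) ⟨le_rfl, by linarith [sq_nonneg ε]⟩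
  have hball := isLittleO_setAverage_ball_sub_taylor (u := fun ε y => v (y, t - ε ^ 2))
    (a := fun ε => v (x, t) - ε ^ 2 * deriv (fun s => v (x, s)) t) hint htaylor
  have hsphere := isLittleO_iSup_sphere_sub_taylor (u := fun ε y => v (y, t - ε ^ 2))
    (a := fun ε => v (x, t) - ε ^ 2 * deriv (fun s => v (x, s)) t) htaylor
  have hpn : p + n ≠ 0 := by positivity
  refine ((hball.const_mul_left ((n + 2) / (p + n))).add
    (hsphere.const_mul_left ((p - 2) / (p + n)))).congr' (Eventually.of_forall fun ε => ?_)
    EventuallyEq.rfl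
  simp only [Fintype.card_fin]
  field_simp
  ring

/-- **Asymptotic mean value formula** (Theorem 2.1). For a function `v` of class `C^{2,1}`
on `Ω × (0,T)` (continuous spatial gradient, continuous spatial Hessian, continuous time
derivative), at every `(x,t) ∈ Ω × (0,T)` one has, as `ε → 0⁺`,
`β ⨍_{B_ε(x)} v(y,t-ε²) dy + α sup_{|σ|=1} (v(x+εσ,t-ε²)+v(x-εσ,t-ε²))/2
  = v(x,t) + ε²/(2(n+p)) (𝒟_p v(x,t) − 2(n+p) ∂_t v(x,t)) + o(ε²)`,
where `𝒟_p v = Δv + (p−2) λ_max(D²v)` with `λ_max(D²v) = sup_{|σ|=1} ⟨D²v σ, σ⟩`. -/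
theorem asymptotic_mean_value_formula
    (n : ℕ) (hn : 1 ≤ n) (p : ℝ) (hp : 2 < p)
    (Ω : Set (EuclideanSpace ℝ (Fin n))) (hΩ : IsOpen Ω) (T : ℝ) (hT : 0 < T)
    (v : EuclideanSpace ℝ (Fin n) × ℝ → ℝ)
    (hvCont : ContinuousOn v (Ω ×ˢ Ioo 0 T))
    (hSpDiff : ∀ x ∈ Ω, ∀ t ∈ Ioo (0:ℝ) T,
      DifferentiableAt ℝ (fun y => v (y, t)) x ∧
      DifferentiableAt ℝ (fderiv ℝ (fun y => v (y, t))) x)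
    (hTimeDiff : ∀ x ∈ Ω, ∀ t ∈ Ioo (0:ℝ) T, DifferentiableAt ℝ (fun s => v (x, s)) t)
    (hGradCont : ContinuousOn
      (fun q : EuclideanSpace ℝ (Fin n) × ℝ => fderiv ℝ (fun y => v (y, q.2)) q.1)
      (Ω ×ˢ Ioo 0 T))
    (hHessCont : ContinuousOn
      (fun q : EuclideanSpace ℝ (Fin n) × ℝ => fderiv ℝ (fderiv ℝ (fun y => v (y, q.2))) q.1)
      (Ω ×ˢ Ioo 0 T))
    (hTimeCont : ContinuousOn
      (fun q : EuclideanSpace ℝ (Fin n) × ℝ => deriv (fun s => v (q.1, s)) q.2)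
      (Ω ×ˢ Ioo 0 T))
    (x : EuclideanSpace ℝ (Fin n)) (hx : x ∈ Ω) (t : ℝ) (ht : t ∈ Ioo (0:ℝ) T) :
    (fun ε : ℝ =>
      (((n : ℝ) + 2) / (p + n)) * (⨍ y in ball x ε, v (y, t - ε ^ 2)) +
      ((p - 2) / (p + n)) *
        (⨆ σ : sphere (0 : EuclideanSpace ℝ (Fin n)) 1,
          (v (x + ε • (σ : EuclideanSpace ℝ (Fin n)), t - ε ^ 2) +
           v (x - ε • (σ : EuclideanSpace ℝ (Fin n)), t - ε ^ 2)) / 2) -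
      (v (x, t) + ε ^ 2 / (2 * ((n : ℝ) + p)) *
        ((∑ i : Fin n, fderiv ℝ (fderiv ℝ (fun y => v (y, t))) x
            (EuclideanSpace.single i 1) (EuclideanSpace.single i 1)) +
         (p - 2) *
          (⨆ σ : sphere (0 : EuclideanSpace ℝ (Fin n)) 1,
            fderiv ℝ (fderiv ℝ (fun y => v (y, t))) x
              (σ : EuclideanSpace ℝ (Fin n)) (σ : EuclideanSpace ℝ (Fin n))) -
         2 * ((n : ℝ) + p) * deriv (fun s => v (x, s)) t)))
      =o[𝓝[>] (0 : ℝ)] (fun ε => ε ^ 2) :=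
  asymptotic_mean_value_formula_general n hn p hp Ω hΩ T v hvCont hSpDiff hTimeDiff hTimeCont x hx t
    ht
end

section
/- Let n ≥ 1 and let f : ℝⁿ → ℝ be twice continuously differentiable in a neighborhood of a point x ∈ ℝⁿ. Then as ε → 0⁺, sup_{|σ|=1} [f(x+εσ) + f(x−εσ)]/2 = f(x) + (ε²/2) · sup_{|σ|=1} ⟨D²f(x)σ, σ⟩ + o(ε²), where both suprema are taken over unit vectors σ ∈ ℝⁿ. -/
/-!
Expanding `f` to second order at `x` in the directions `h` and `-h`, the first-order terms cancel:
`f (x + h) + f (x - h) = 2 f x + D²f(x)(h, h) + o(‖h‖²)`. For `h = ε σ` with `‖σ‖ = 1` the error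
is `o(ε²)` uniformly in `σ`, and a uniform bound between two families of reals passes to their
suprema. The Taylor expansion itself is the mean value inequality applied to the remainder, whose
derivative `f' y - f' x - D²f(x)(y - x)` is `o(‖y - x‖)`.
-/

open Asymptotics Filter Metric Set Topology

section Taylor

variable {E F : Type*} [NormedAddCommGroup E] [NormedSpace ℝ E]
  [NormedAddCommGroup F] [NormedSpace ℝ F] {f : E → F} {x : E}

theorem ContDiffAt.isLittleO_taylor_two (hf : ContDiffAt ℝ 2 f x) :
    (fun y => f y - f x - fderiv ℝ f x (y - x)
        - (1 / 2 : ℝ) • fderiv ℝ (fderiv ℝ f) x (y - x) (y - x))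
      =o[𝓝 x] fun y => ‖y - x‖ ^ 2 := by
  set B := fderiv ℝ (fderiv ℝ f) x
  have hsymm : ∀ v w, B v w = B w v := (hf.isSymmSndFDerivAt (by simp)).eq
  have hB : HasFDerivAt (fderiv ℝ f) B x :=
    ((hf.fderiv_right (m := 1) le_rfl).differentiableAt one_ne_zero).hasFDerivAt
  obtain ⟨δ, hδ, hdiff⟩ : ∃ δ > 0, ∀ y ∈ ball x δ, HasFDerivAt f (fderiv ℝ f y) y :=
    Metric.mem_nhds_iff.1 <| (hf.eventually (by simp)).mono fun y hy =>
      (hy.differentiableAt two_ne_zero).hasFDerivAt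
  have hnhds : 𝓝[ball x δ] x = 𝓝 x := isOpen_ball.nhdsWithin_eq (mem_ball_self hδ)
  have hremainder := (convex_ball x δ).isLittleO_pow_succ (mem_ball_self hδ) (n := 1)
    (f := fun y => f y - fderiv ℝ f x (y - x) - (1 / 2 : ℝ) • B (y - x) (y - x))
    (f' := fun y => fderiv ℝ f y - fderiv ℝ f x - B (y - x)) ?_ ?_
  · rw [hnhds] at hremainder
    simpa [sub_right_comm _ (f x)] using hremainder
  · intro y hy
    have hshift : HasFDerivAt (fun y => y - x) (ContinuousLinearMap.id ℝ E) y :=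
      (hasFDerivAt_id y).sub_const x
    have hlin := (fderiv ℝ f x).hasFDerivAt.comp y hshift
    have hquad := B.hasFDerivAt_of_bilinear hshift hshift
    refine (((hdiff y hy).sub hlin).sub (hquad.const_smul (1 / 2 : ℝ))).congr_fderiv
      ?_ |>.hasFDerivWithinAt
    ext v
    -- the derivative of `B (y - x) (y - x)` is `2 B (y - x)` only because `B` is symmetric
    simp [hsymm v y, hsymm v x]
    module
  · rw [hnhds]
    simpa using hB.isLittleO

theorem ContDiffAt.isLittleO_symmetric_taylor_two (hf : ContDiffAt ℝ 2 f x) :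
    (fun h => f (x + h) + f (x - h) - 2 • f x - fderiv ℝ (fderiv ℝ f) x h h)
      =o[𝓝 0] fun h => ‖h‖ ^ 2 := by
  have hT := hf.isLittleO_taylor_two
  set B := fderiv ℝ (fderiv ℝ f) x
  have hplus : Tendsto (x + ·) (𝓝 0) (𝓝 x) := by simpa using (continuous_const_add x).tendsto 0
  have hminus : Tendsto (x - ·) (𝓝 0) (𝓝 x) := by simpa using (continuous_sub_left x).tendsto 0
  have h₁ : (fun h => f (x + h) - f x - fderiv ℝ f x h - (1 / 2 : ℝ) • B h h)
      =o[𝓝 0] fun h => ‖h‖ ^ 2 := by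
    refine (hT.comp_tendsto hplus).congr (fun h => ?_) (fun h => ?_) <;>
      simp only [Function.comp_apply, add_sub_cancel_left]
  have h₂ : (fun h => f (x - h) - f x + fderiv ℝ f x h - (1 / 2 : ℝ) • B h h)
      =o[𝓝 0] fun h => ‖h‖ ^ 2 := by
    refine (hT.comp_tendsto hminus).congr (fun h => ?_) (fun h => ?_) <;>
      simp only [Function.comp_apply, sub_sub_cancel_left, map_neg, neg_neg, norm_neg,
        neg_apply, sub_neg_eq_add]
  refine (h₁.add h₂).congr_left fun h => ?_
  module

end Taylor

theorem abs_ciSup_sub_ciSup_le_s4 {ι : Type*} [Nonempty ι] {a b : ι → ℝ} {c : ℝ}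
    (hb : BddAbove (range b)) (hab : ∀ i, |a i - b i| ≤ c) :
    |(⨆ i, a i) - ⨆ i, b i| ≤ c := by
  obtain ⟨M, hM⟩ := hb
  have ha : BddAbove (range a) :=
    ⟨M + c, by rintro _ ⟨i, rfl⟩; linarith [(abs_le.1 (hab i)).2, hM ⟨i, rfl⟩]⟩
  rw [abs_sub_le_iff, sub_le_iff_le_add, sub_le_iff_le_add]
  constructor
  · exact ciSup_le fun i => by linarith [(abs_le.1 (hab i)).2, le_ciSup ⟨M, hM⟩ i]
  · exact ciSup_le fun i => by linarith [(abs_le.1 (hab i)).1, le_ciSup ha i]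

theorem eventually_forall_smul_mem_sphere {E : Type*} [NormedAddCommGroup E] [NormedSpace ℝ E]
    {p : E → Prop} (hp : ∀ᶠ h in 𝓝 0, p h) :
    ∀ᶠ ε in 𝓝 (0 : ℝ), ∀ σ ∈ sphere (0 : E) 1, p (ε • σ) := by
  obtain ⟨δ, hδ, h⟩ := Metric.eventually_nhds_iff.1 hp
  filter_upwards [ball_mem_nhds (0 : ℝ) hδ] with ε hε σ hσ
  apply h
  simpa [norm_smul, mem_sphere_zero_iff_norm.1 hσ] using hε

theorem ContDiffAt.isLittleO_iSup_sphere_symmetric_mean {E : Type*} [NormedAddCommGroup E]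
    [NormedSpace ℝ E] [Nontrivial E] {f : E → ℝ} {x : E} (hf : ContDiffAt ℝ 2 f x) :
    (fun ε : ℝ => (⨆ σ : sphere (0 : E) 1, (f (x + ε • (σ : E)) + f (x - ε • (σ : E))) / 2)
      - (f x + ε ^ 2 / 2 * ⨆ σ : sphere (0 : E) 1, fderiv ℝ (fderiv ℝ f) x σ σ))
      =o[𝓝 0] fun ε => ε ^ 2 := by
  have : Nonempty (sphere (0 : E) 1) := (NormedSpace.sphere_nonempty.2 zero_le_one).to_subtype
  set B := fderiv ℝ (fderiv ℝ f) x
  have hB : ∀ σ ∈ sphere (0 : E) 1, B σ σ ≤ ‖B‖ := fun σ hσ => by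
    simpa [mem_sphere_zero_iff_norm.1 hσ] using (le_abs_self _).trans (B.le_opNorm₂ σ σ)
  have hbdd (ε : ℝ) : BddAbove (range fun σ : sphere (0 : E) 1 => ε ^ 2 / 2 * B σ σ) :=
    ⟨ε ^ 2 / 2 * ‖B‖, by
      rintro _ ⟨σ, rfl⟩; exact mul_le_mul_of_nonneg_left (hB σ σ.2) (by positivity)⟩
  have hsup (ε : ℝ) : ⨆ σ : sphere (0 : E) 1, f x + ε ^ 2 / 2 * B σ σ
      = f x + ε ^ 2 / 2 * ⨆ σ : sphere (0 : E) 1, B σ σ := by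
    rw [Real.mul_iSup_of_nonneg (by positivity), add_ciSup (hbdd ε)]
  simp_rw [← hsup, isLittleO_iff]
  intro c hc
  filter_upwards [eventually_forall_smul_mem_sphere
    (isLittleO_iff.1 hf.isLittleO_symmetric_taylor_two hc)] with ε hε
  rw [Real.norm_eq_abs, norm_pow, Real.norm_eq_abs, sq_abs]
  refine abs_ciSup_sub_ciSup_le_s4 ((hbdd ε).range_comp_left (monotone_id.const_add (f x))) fun σ => ?_
  have hσ := hε σ σ.2
  simp only [norm_smul, mem_sphere_zero_iff_norm.1 σ.2, map_smul, smul_apply,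
    smul_eq_mul, nsmul_eq_mul, Nat.cast_ofNat, Real.norm_eq_abs, sq_abs, mul_one, abs_pow] at hσ
  rw [abs_le] at hσ ⊢
  constructor <;> linarith [hσ.1, hσ.2]

/-- For `f` twice continuously differentiable near `x`, as `ε → 0⁺`,
`sup_{|σ|=1} (f(x+εσ)+f(x−εσ))/2 = f(x) + ε²/2 · sup_{|σ|=1} ⟨D²f(x)σ,σ⟩ + o(ε²)`. -/
theorem sup_symmetric_difference_expansion
    (n : ℕ) (hn : 1 ≤ n) (f : EuclideanSpace ℝ (Fin n) → ℝ)
    (x : EuclideanSpace ℝ (Fin n))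
    (U : Set (EuclideanSpace ℝ (Fin n))) (hU : U ∈ nhds x) (hf : ContDiffOn ℝ 2 f U) :
    (fun ε : ℝ =>
      (⨆ σ : sphere (0 : EuclideanSpace ℝ (Fin n)) 1,
        (f (x + ε • (σ : EuclideanSpace ℝ (Fin n))) +
         f (x - ε • (σ : EuclideanSpace ℝ (Fin n)))) / 2) -
      (f x + ε ^ 2 / 2 *
        ⨆ σ : sphere (0 : EuclideanSpace ℝ (Fin n)) 1,
          fderiv ℝ (fderiv ℝ f) x
            (σ : EuclideanSpace ℝ (Fin n)) (σ : EuclideanSpace ℝ (Fin n))))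
      =o[𝓝[>] (0 : ℝ)] (fun ε => ε ^ 2) := by
  have : Nonempty (Fin n) := ⟨⟨0, hn⟩⟩
  exact (hf.contDiffAt hU).isLittleO_iSup_sphere_symmetric_mean.mono nhdsWithin_le_nhds
end

section
/- Let n ≥ 1, 2 < p < ∞, α = (p−2)/(p+n), β = (n+2)/(p+n), and ε > 0. If u : ℝⁿ → ℝ is bounded and lower semicontinuous, then the function x ↦ β · ⨍_{B_ε(x)} u(y) dy + α · sup_{|σ|=1} [u(x+εσ) + u(x−εσ)]/2 is bounded and lower semicontinuous on ℝⁿ. -/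
/-!
The average term is continuous: `∫_{B_ε(x)} u` is the integral of `(ball x ε).indicator u`, and
for every `y` off the null sphere `sphere x₀ ε` this integrand is locally constant in `x` near
`x₀`, so dominated convergence applies. The supremum term is a supremum of lower semicontinuous
translates of `u` that is bounded above, hence lower semicontinuous. Both terms are bounded by
`sup |u|`, and for `p > 2` both weights are nonnegative.
-/

open MeasureTheory Metric Set Filter

theorem abs_iSup_le_of_forall_abs_le {ι : Sort*} {f : ι → ℝ} {M : ℝ} (hM : 0 ≤ M)
    (hf : ∀ i, |f i| ≤ M) : |⨆ i, f i| ≤ M := by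
  refine abs_le.2 ⟨?_, Real.iSup_le (fun i => (abs_le.1 (hf i)).2) hM⟩
  cases isEmpty_or_nonempty ι with
  | inl _ => simpa [Real.iSup_of_isEmpty] using hM
  | inr hne =>
    obtain ⟨i⟩ := hne
    have hbdd : BddAbove (range f) := ⟨M, forall_mem_range.2 fun j => (abs_le.1 (hf j)).2⟩
    exact (abs_le.1 (hf i)).1.trans (le_ciSup hbdd i)

theorem LowerSemicontinuous.const_mul_of_nonneg {α : Type*} [TopologicalSpace α] {f : α → ℝ}
    (hf : LowerSemicontinuous f) {c : ℝ} (hc : 0 ≤ c) :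
    LowerSemicontinuous fun x => c * f x :=
  (continuous_const_mul c).comp_lowerSemicontinuous hf (monotone_mul_left_of_nonneg hc)

theorem abs_iSup_symmetricMean_le {G : Type*} {ι : Sort*} [AddGroup G] {u : G → ℝ} {M : ℝ}
    (hM : ∀ x, |u x| ≤ M) (v : ι → G) (x : G) :
    |⨆ i, (u (x + v i) + u (x - v i)) / 2| ≤ M :=
  abs_iSup_le_of_forall_abs_le ((abs_nonneg _).trans (hM 0)) fun i => by
    have h₁ := abs_le.1 (hM (x + v i))
    have h₂ := abs_le.1 (hM (x - v i))
    rw [abs_le]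
    constructor <;> linarith

theorem LowerSemicontinuous.iSup_symmetricMean {G : Type*} {ι : Sort*} [TopologicalSpace G]
    [AddGroup G] [IsTopologicalAddGroup G] {u : G → ℝ} {M : ℝ} (hu : LowerSemicontinuous u)
    (hM : ∀ x, |u x| ≤ M) (v : ι → G) :
    LowerSemicontinuous fun x => ⨆ i, (u (x + v i) + u (x - v i)) / 2 := by
  refine lowerSemicontinuous_ciSup (fun x => ⟨M, forall_mem_range.2 fun i => ?_⟩) fun i => ?_
  · linarith [(abs_le.1 (hM (x + v i))).2, (abs_le.1 (hM (x - v i))).2]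
  · exact (continuous_id.div_const 2).comp_lowerSemicontinuous
      ((hu.comp (continuous_add_const (v i))).add (hu.comp (continuous_sub_right (v i))))
      fun a b hab => div_le_div_of_nonneg_right hab zero_le_two

theorem abs_setAverage_le_s5 {α : Type*} [MeasurableSpace α] {μ : Measure α} {s : Set α}
    {u : α → ℝ} {M : ℝ} (hs₀ : μ s ≠ 0) (hs : μ s ≠ ⊤) (hu : IntegrableOn u s μ)
    (hM : ∀ᵐ x ∂μ.restrict s, |u x| ≤ M) : |⨍ x in s, u x ∂μ| ≤ M :=
  abs_le.2 <| (convex_Icc (-M) M).set_average_mem isClosed_Icc hs₀ hs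
    (hM.mono fun _ hx => abs_le.1 hx) hu

theorem abs_setAverage_ball_le {E : Type*} [NormedAddCommGroup E] [NormedSpace ℝ E]
    [MeasurableSpace E] [FiniteDimensional ℝ E] {μ : Measure E} [μ.IsAddHaarMeasure] {u : E → ℝ}
    {r M : ℝ} (hu : LocallyIntegrable u μ) (hr : 0 < r) (hM : ∀ x, |u x| ≤ M) (x : E) :
    |⨍ y in ball x r, u y ∂μ| ≤ M :=
  abs_setAverage_le_s5 (measure_ball_pos μ x hr).ne' measure_ball_lt_top.ne
    (hu.integrableOn_isCompact (isCompact_closedBall x r) |>.mono_set ball_subset_closedBall)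
    (ae_of_all _ hM)

theorem continuousAt_indicator_ball_apply {X : Type*} [PseudoMetricSpace X] {u : X → ℝ}
    {r : ℝ} {x₀ y : X} (hy : dist y x₀ ≠ r) :
    ContinuousAt (fun x => (ball x r).indicator u y) x₀ := by
  rcases hy.lt_or_gt with h | h
  · refine continuousAt_const.congr (f := fun _ => u y) ?_
    filter_upwards [isOpen_ball.mem_nhds (mem_ball_comm.1 h)] with x hx
    rw [indicator_of_mem (mem_ball_comm.1 hx)]
  · refine continuousAt_const.congr (f := fun _ => 0) ?_
    have hx₀ : x₀ ∈ (closedBall y r)ᶜ := by simpa [dist_comm] using h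
    filter_upwards [isClosed_closedBall.isOpen_compl.mem_nhds hx₀] with x hx
    rw [indicator_of_notMem fun hyx => hx (mem_closedBall_comm.1 (ball_subset_closedBall hyx))]

section BallAverage

variable {E : Type*} [NormedAddCommGroup E] [NormedSpace ℝ E] [MeasurableSpace E] [BorelSpace E]
  [FiniteDimensional ℝ E] {μ : Measure E} [μ.IsAddHaarMeasure] {u : E → ℝ} {r : ℝ}

theorem continuous_setIntegral_ball (hu : LocallyIntegrable u μ) (hr : 0 < r) :
    Continuous fun x => ∫ y in ball x r, u y ∂μ := by
  refine continuous_iff_continuousAt.2 fun x₀ => ?_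
  simp_rw [← integral_indicator measurableSet_ball]
  have hbound : Integrable ((closedBall x₀ (r + 1)).indicator fun y => ‖u y‖) μ :=
    IntegrableOn.integrable_indicator
      (hu.integrableOn_isCompact (isCompact_closedBall x₀ (r + 1))).norm measurableSet_closedBall
  refine continuousAt_of_dominated
    (Eventually.of_forall fun x => hu.aestronglyMeasurable.indicator measurableSet_ball)
    ?_ hbound ?_
  · filter_upwards [ball_mem_nhds x₀ one_pos] with x hx
    refine ae_of_all _ fun y => ?_
    rw [norm_indicator_eq_indicator_norm]
    refine indicator_le_indicator_of_subset (fun z hz => ?_) (fun _ => norm_nonneg _) y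
    rw [mem_ball] at hx hz
    rw [mem_closedBall]
    linarith [dist_triangle z x x₀]
  · filter_upwards [measure_eq_zero_iff_ae_notMem.1
      (Measure.addHaar_sphere_of_ne_zero μ x₀ hr.ne')] with y hy
    exact continuousAt_indicator_ball_apply hy

theorem continuous_setAverage_ball (hu : LocallyIntegrable u μ) (hr : 0 < r) :
    Continuous fun x => ⨍ y in ball x r, u y ∂μ := by
  simp_rw [setAverage_eq, Measure.addHaar_real_ball_center μ _ r]
  exact (continuous_setIntegral_ball hu hr).const_smul (μ.real (ball (0 : E) r))⁻¹

end BallAverage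

theorem dpp_operator_preserves_bounded_lsc_general
    (n : ℕ) (p : ℝ) (hp : 2 < p) (ε : ℝ) (hε : 0 < ε)
    (u : EuclideanSpace ℝ (Fin n) → ℝ)
    (hbd : ∃ M : ℝ, ∀ x, |u x| ≤ M) (hlsc : LowerSemicontinuous u) :
    (∃ M : ℝ, ∀ x,
      |(((n : ℝ) + 2) / (p + n)) * (⨍ y in ball x ε, u y) +
        ((p - 2) / (p + n)) *
          (⨆ σ : sphere (0 : EuclideanSpace ℝ (Fin n)) 1,
            (u (x + ε • (σ : EuclideanSpace ℝ (Fin n))) +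
             u (x - ε • (σ : EuclideanSpace ℝ (Fin n)))) / 2)| ≤ M) ∧
    LowerSemicontinuous (fun x : EuclideanSpace ℝ (Fin n) =>
      (((n : ℝ) + 2) / (p + n)) * (⨍ y in ball x ε, u y) +
        ((p - 2) / (p + n)) *
          (⨆ σ : sphere (0 : EuclideanSpace ℝ (Fin n)) 1,
            (u (x + ε • (σ : EuclideanSpace ℝ (Fin n))) +
             u (x - ε • (σ : EuclideanSpace ℝ (Fin n)))) / 2)) := by
  obtain ⟨M, hM⟩ := hbd
  have hu : LocallyIntegrable u volume :=
    (memLp_top_of_bound hlsc.measurable.aestronglyMeasurable M (ae_of_all _ hM)).locallyIntegrable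
      le_top
  have hpn : 0 < p + n := by positivity
  have hβ : 0 ≤ ((n : ℝ) + 2) / (p + n) := by positivity
  have hα : 0 ≤ (p - 2) / (p + n) := div_nonneg (by linarith) hpn.le
  let v : sphere (0 : EuclideanSpace ℝ (Fin n)) 1 → EuclideanSpace ℝ (Fin n) := fun σ => ε • σ
  refine ⟨⟨((n : ℝ) + 2) / (p + n) * M + (p - 2) / (p + n) * M, fun x => ?_⟩, ?_⟩
  · have hA := abs_le.1 (abs_setAverage_ball_le hu hε hM x)
    have hS := abs_le.1 (abs_iSup_symmetricMean_le hM v x)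
    rw [abs_le]
    constructor <;> nlinarith
  · exact (continuous_const.mul (continuous_setAverage_ball hu hε)).lowerSemicontinuous.add
      ((hlsc.iSup_symmetricMean hM v).const_mul_of_nonneg hα)

/-- If `u` is bounded and lower semicontinuous, then so is
`x ↦ β ⨍_{B_ε(x)} u + α sup_{|σ|=1} (u(x+εσ)+u(x−εσ))/2`, where
`α = (p−2)/(p+n)` and `β = (n+2)/(p+n)`. -/
theorem dpp_operator_preserves_bounded_lsc
    (n : ℕ) (hn : 1 ≤ n) (p : ℝ) (hp : 2 < p) (ε : ℝ) (hε : 0 < ε)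
    (u : EuclideanSpace ℝ (Fin n) → ℝ)
    (hbd : ∃ M : ℝ, ∀ x, |u x| ≤ M) (hlsc : LowerSemicontinuous u) :
    (∃ M : ℝ, ∀ x,
      |(((n : ℝ) + 2) / (p + n)) * (⨍ y in ball x ε, u y) +
        ((p - 2) / (p + n)) *
          (⨆ σ : sphere (0 : EuclideanSpace ℝ (Fin n)) 1,
            (u (x + ε • (σ : EuclideanSpace ℝ (Fin n))) +
             u (x - ε • (σ : EuclideanSpace ℝ (Fin n)))) / 2)| ≤ M) ∧
    LowerSemicontinuous (fun x : EuclideanSpace ℝ (Fin n) =>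
      (((n : ℝ) + 2) / (p + n)) * (⨍ y in ball x ε, u y) +
        ((p - 2) / (p + n)) *
          (⨆ σ : sphere (0 : EuclideanSpace ℝ (Fin n)) 1,
            (u (x + ε • (σ : EuclideanSpace ℝ (Fin n))) +
             u (x - ε • (σ : EuclideanSpace ℝ (Fin n)))) / 2)) :=
  dpp_operator_preserves_bounded_lsc_general n p hp ε hε u hbd hlsc
end

section
/- Let n ≥ 1, 2 < p < ∞, let Ω ⊂ ℝⁿ be a bounded open set, T > 0, and ε > 0. Suppose u, v : ℝⁿ × ℝ → ℝ are bounded Borel measurable functions that both satisfy the DPP with parameter ε at every point (x,t) ∈ Ω × (0,T], and that u(y,s) = v(y,s) for every point (y,s) ∉ Ω × (0,T]. Then u = v everywhere on ℝⁿ × ℝ. -/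
open MeasureTheory Metric Set

/-- `u` satisfies the dynamic programming principle with parameter `ε` at `(x,t)`:
`u(x,t) = β ⨍_{B_ε(x)} u(y,t−ε²) dy + α sup_{|σ|=1} (u(x+εσ,t−ε²)+u(x−εσ,t−ε²))/2`,
where `α = (p−2)/(p+n)`, `β = (n+2)/(p+n)`. -/
def SatisfiesDPPAt (n : ℕ) (p ε : ℝ) (u : EuclideanSpace ℝ (Fin n) × ℝ → ℝ)
    (x : EuclideanSpace ℝ (Fin n)) (t : ℝ) : Prop :=
  u (x, t) = (((n : ℝ) + 2) / (p + n)) * (⨍ y in ball x ε, u (y, t - ε ^ 2)) +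
    ((p - 2) / (p + n)) *
      (⨆ σ : sphere (0 : EuclideanSpace ℝ (Fin n)) 1,
        (u (x + ε • (σ : EuclideanSpace ℝ (Fin n)), t - ε ^ 2) +
         u (x - ε • (σ : EuclideanSpace ℝ (Fin n)), t - ε ^ 2)) / 2)

/-- **Uniqueness for the DPP**: two bounded Borel functions satisfying the DPP in
`Ω × (0,T]` with the same boundary values outside `Ω × (0,T]` coincide everywhere. -/
theorem dpp_unique
    (n : ℕ) (hn : 1 ≤ n) (p : ℝ) (hp : 2 < p)
    (Ω : Set (EuclideanSpace ℝ (Fin n))) (hΩo : IsOpen Ω)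
    (hΩb : Bornology.IsBounded Ω) (T : ℝ) (hT : 0 < T) (ε : ℝ) (hε : 0 < ε)
    (u v : EuclideanSpace ℝ (Fin n) × ℝ → ℝ)
    (hu_bd : ∃ M : ℝ, ∀ q, |u q| ≤ M) (hv_bd : ∃ M : ℝ, ∀ q, |v q| ≤ M)
    (hu_meas : Measurable u) (hv_meas : Measurable v)
    (hu_dpp : ∀ x ∈ Ω, ∀ t ∈ Ioc (0 : ℝ) T, SatisfiesDPPAt n p ε u x t)
    (hv_dpp : ∀ x ∈ Ω, ∀ t ∈ Ioc (0 : ℝ) T, SatisfiesDPPAt n p ε v x t)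
    (hbdry : ∀ q : EuclideanSpace ℝ (Fin n) × ℝ, q ∉ Ω ×ˢ Ioc (0 : ℝ) T → u q = v q) :
    u = v := by
  have hε2 : 0 < ε ^ 2 := by positivity
  have key : ∀ k : ℕ, ∀ x t, t ≤ (k : ℝ) * ε ^ 2 → u (x, t) = v (x, t) := by
    intro k
    induction k with
    | zero =>
      intro x t ht
      refine hbdry _ fun h => absurd h.2.1 (not_lt.2 ?_)
      simpa using ht
    | succ k ih =>
      intro x t ht
      by_cases hmem : (x, t) ∈ Ω ×ˢ Ioc (0 : ℝ) T
      · obtain ⟨hx, ht'⟩ := hmem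
        have hu := hu_dpp x hx t ht'
        have hv := hv_dpp x hx t ht'
        rw [SatisfiesDPPAt] at hu hv
        have heq : ∀ y, u (y, t - ε ^ 2) = v (y, t - ε ^ 2) := by
          intro y
          apply ih
          push_cast at ht
          linarith
        rw [hu, hv]
        simp only [heq]
      · exact hbdry _ hmem
  funext q
  obtain ⟨x, t⟩ := q
  obtain ⟨k, hk⟩ := exists_nat_gt (t / ε ^ 2)
  rw [div_lt_iff₀ hε2] at hk
  exact key k x t hk.le
end

section
/- Let n ≥ 1, 2 < p < ∞, let Ω ⊂ ℝⁿ be a bounded open set, T > 0, and ε > 0. Suppose u, v : ℝⁿ × ℝ → ℝ are bounded Borel measurable functions that both satisfy the DPP with parameter ε at every point (x,t) ∈ Ω × (0,T], and that u(y,s) ≤ v(y,s) for every point (y,s) ∉ Ω × (0,T]. Then u ≤ v everywhere on ℝⁿ × ℝ (comparison principle). -/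
/-!
The right-hand side of the DPP only sees the time slice `t - ε²` and is monotone in it:
`α, β ≥ 0`, and both the ball average and the supremum of midpoint values are monotone.
So `u ≤ v` on the slice `t - ε²` gives `u ≤ v` at time `t`: inside `Ω × (0,T]` by the DPP,
outside by hypothesis. Every slice with `t ≤ 0` lies outside `Ω × (0,T]`, so induction over
steps of length `ε²` reaches every time.
-/

open MeasureTheory Metric Set

theorem MeasureTheory.setAverage_mono {α : Type*} [MeasurableSpace α] {μ : Measure α}
    {s : Set α} {f g : α → ℝ} (hf : IntegrableOn f s μ) (hg : IntegrableOn g s μ)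
    (hfg : f ≤ g) :
    ⨍ x in s, f x ∂μ ≤ ⨍ x in s, g x ∂μ := by
  rw [setAverage_eq, setAverage_eq, smul_eq_mul, smul_eq_mul]
  exact mul_le_mul_of_nonneg_left (setIntegral_mono hf hg hfg) (by positivity)

theorem integrableOn_ball_of_abs_le {E : Type*} [PseudoMetricSpace E] [ProperSpace E]
    [MeasurableSpace E] {μ : Measure E} [IsFiniteMeasureOnCompacts μ] {f : E → ℝ}
    (hf : Measurable f) {M : ℝ} (hM : ∀ y, |f y| ≤ M) (x : E) (r : ℝ) :
    IntegrableOn f (ball x r) μ :=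
  Measure.integrableOn_of_bounded measure_ball_lt_top.ne hf.aestronglyMeasurable
    (Filter.Eventually.of_forall hM)

theorem forall_of_nonpos_of_step {X : Type*} {P : X × ℝ → Prop} {h : ℝ} (hh : 0 < h)
    (base : ∀ q : X × ℝ, q.2 ≤ 0 → P q)
    (step : ∀ x t, (∀ y, P (y, t - h)) → P (x, t)) :
    ∀ q, P q := by
  have below : ∀ k : ℕ, ∀ q : X × ℝ, q.2 ≤ k * h → P q := by
    intro k
    induction k with
    | zero => simpa using base
    | succ k ih =>
      rintro ⟨x, t⟩ ht
      push_cast at ht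
      exact step x t fun y => ih (y, t - h) (by dsimp only; linarith)
  intro q
  obtain ⟨k, hk⟩ := exists_nat_ge (q.2 / h)
  exact below k q ((div_le_iff₀ hh).1 hk)

noncomputable def dppRHS (n : ℕ) (p ε : ℝ) (f : EuclideanSpace ℝ (Fin n) → ℝ)
    (x : EuclideanSpace ℝ (Fin n)) : ℝ :=
  (((n : ℝ) + 2) / (p + n)) * (⨍ y in ball x ε, f y) +
    ((p - 2) / (p + n)) *
      (⨆ σ : sphere (0 : EuclideanSpace ℝ (Fin n)) 1,
        (f (x + ε • (σ : EuclideanSpace ℝ (Fin n))) +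
         f (x - ε • (σ : EuclideanSpace ℝ (Fin n)))) / 2)

theorem dppRHS_mono {n : ℕ} {p : ℝ} (hp : 2 ≤ p) (ε : ℝ)
    {f g : EuclideanSpace ℝ (Fin n) → ℝ} {x : EuclideanSpace ℝ (Fin n)}
    (hf : IntegrableOn f (ball x ε)) (hg : IntegrableOn g (ball x ε))
    (hg_bdd : BddAbove (range g)) (hfg : f ≤ g) :
    dppRHS n p ε f x ≤ dppRHS n p ε g x := by
  obtain ⟨M, hM⟩ := hg_bdd
  have hgM : ∀ y, g y ≤ M := fun y => hM (mem_range_self y)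
  unfold dppRHS
  gcongr
  · exact setAverage_mono hf hg hfg
  · refine ⟨M, forall_mem_range.2 fun σ => ?_⟩
    linarith [hgM (x + ε • σ.1), hgM (x - ε • σ.1)]
  all_goals exact hfg _

theorem dpp_comparison_general
    (n : ℕ) (p : ℝ) (hp : 2 < p)
    (Ω : Set (EuclideanSpace ℝ (Fin n)))
    (T : ℝ) (ε : ℝ) (hε : 0 < ε)
    (u v : EuclideanSpace ℝ (Fin n) × ℝ → ℝ)
    (hu_bd : ∃ M : ℝ, ∀ q, |u q| ≤ M) (hv_bd : ∃ M : ℝ, ∀ q, |v q| ≤ M)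
    (hu_meas : Measurable u) (hv_meas : Measurable v)
    (hu_dpp : ∀ x ∈ Ω, ∀ t ∈ Ioc (0 : ℝ) T, SatisfiesDPPAt n p ε u x t)
    (hv_dpp : ∀ x ∈ Ω, ∀ t ∈ Ioc (0 : ℝ) T, SatisfiesDPPAt n p ε v x t)
    (hbdry : ∀ q : EuclideanSpace ℝ (Fin n) × ℝ, q ∉ Ω ×ˢ Ioc (0 : ℝ) T → u q ≤ v q) :
    ∀ q : EuclideanSpace ℝ (Fin n) × ℝ, u q ≤ v q := by
  obtain ⟨Mu, hMu⟩ := hu_bd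
  obtain ⟨Mv, hMv⟩ := hv_bd
  refine forall_of_nonpos_of_step (pow_pos hε 2)
    (fun q hq => hbdry q fun hmem => (not_lt.2 hq) hmem.2.1) fun x t hprev => ?_
  by_cases hmem : (x, t) ∈ Ω ×ˢ Ioc (0 : ℝ) T
  · obtain ⟨hx, ht⟩ := hmem
    calc u (x, t) = dppRHS n p ε (fun y => u (y, t - ε ^ 2)) x := hu_dpp x hx t ht
      _ ≤ dppRHS n p ε (fun y => v (y, t - ε ^ 2)) x :=
        dppRHS_mono hp.le ε
          (integrableOn_ball_of_abs_le (hu_meas.comp measurable_prodMk_right) (fun y => hMu _) x ε)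
          (integrableOn_ball_of_abs_le (hv_meas.comp measurable_prodMk_right) (fun y => hMv _) x ε)
          ⟨Mv, forall_mem_range.2 fun y => le_of_abs_le (hMv _)⟩ hprev
      _ = v (x, t) := (hv_dpp x hx t ht).symm
  · exact hbdry _ hmem

/-- **Comparison principle for the DPP**: two bounded Borel functions satisfying the DPP in
`Ω × (0,T]` with ordered boundary values outside `Ω × (0,T]` are ordered everywhere (comparison principle). -/
theorem dpp_comparison
    (n : ℕ) (hn : 1 ≤ n) (p : ℝ) (hp : 2 < p)
    (Ω : Set (EuclideanSpace ℝ (Fin n))) (hΩo : IsOpen Ω)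
    (hΩb : Bornology.IsBounded Ω) (T : ℝ) (hT : 0 < T) (ε : ℝ) (hε : 0 < ε)
    (u v : EuclideanSpace ℝ (Fin n) × ℝ → ℝ)
    (hu_bd : ∃ M : ℝ, ∀ q, |u q| ≤ M) (hv_bd : ∃ M : ℝ, ∀ q, |v q| ≤ M)
    (hu_meas : Measurable u) (hv_meas : Measurable v)
    (hu_dpp : ∀ x ∈ Ω, ∀ t ∈ Ioc (0 : ℝ) T, SatisfiesDPPAt n p ε u x t)
    (hv_dpp : ∀ x ∈ Ω, ∀ t ∈ Ioc (0 : ℝ) T, SatisfiesDPPAt n p ε v x t)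
    (hbdry : ∀ q : EuclideanSpace ℝ (Fin n) × ℝ, q ∉ Ω ×ˢ Ioc (0 : ℝ) T → u q ≤ v q) :
    ∀ q : EuclideanSpace ℝ (Fin n) × ℝ, u q ≤ v q :=
  dpp_comparison_general n p hp Ω T ε hε u v hu_bd hv_bd hu_meas hv_meas hu_dpp hv_dpp hbdry
end

section
/- Let n ≥ 2, 2 < p < ∞, ξ = n + p − 4 (so ξ > 0), z ∈ ℝⁿ, a, b > 0 and c ∈ ℝ, and define w(x) = −a|x−z|² − b|x−z|^{−ξ} + c for x ∈ ℝⁿ, x ≠ z. Then for every x ≠ z, the largest eigenvalue of the Hessian D²w(x) satisfies sup_{|σ|=1} ⟨D²w(x)σ, σ⟩ = −2a + bξ|x−z|^{−ξ−2}, where the supremum is over unit vectors σ ∈ ℝⁿ. -/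
/-!
The gradient of `w` is the radial field `φ(|y - z|) (y - z)` with `φ(r) = -2a + bξ r^(-ξ-2)`, so
`D²w(x) = φ(|x - z|) I - bξ(ξ+2) |x - z|^(-ξ-4) (x - z) ⊗ (x - z)`. Since `ξ > 0` the rank-one
term is negative semidefinite, so on unit vectors the quadratic form is at most `φ(|x - z|)`, with
equality at any unit vector orthogonal to `x - z`; one exists because `n ≥ 2`.
-/

open Metric
open scoped RealInnerProductSpace

section

variable {E : Type*} [NormedAddCommGroup E] [InnerProductSpace ℝ E]

theorem hasFDerivAt_norm_rpow_of_ne_zero (s : ℝ) {x : E} (hx : x ≠ 0) :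
    HasFDerivAt (fun x : E ↦ ‖x‖ ^ s) ((s * ‖x‖ ^ (s - 2)) • innerSL ℝ x) x := by
  convert (hasStrictFDerivAt_norm_sq x).hasFDerivAt.rpow_const (p := s / 2) (by simp [hx])
    using 1
  · ext y
    rw [← Real.rpow_natCast_mul (norm_nonneg _)]
    ring_nf
  · rw [← Real.rpow_natCast_mul (norm_nonneg _), ← Nat.cast_smul_eq_nsmul ℝ, smul_smul]
    ring_nf

theorem hasFDerivAt_norm_sub_rpow (s : ℝ) {y z : E} (hy : y ≠ z) :
    HasFDerivAt (fun x : E ↦ ‖x - z‖ ^ s) ((s * ‖y - z‖ ^ (s - 2)) • innerSL ℝ (y - z)) y :=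
  (hasFDerivAt_comp_sub z).2 (hasFDerivAt_norm_rpow_of_ne_zero s (sub_ne_zero.2 hy))

noncomputable def radialBarrier (a b c ξ : ℝ) (z x : E) : ℝ :=
  -a * ‖x - z‖ ^ 2 - b * ‖x - z‖ ^ (-ξ) + c

theorem hasFDerivAt_radialBarrier (a b c ξ : ℝ) {y z : E} (hy : y ≠ z) :
    HasFDerivAt (radialBarrier a b c ξ z)
      ((-2 * a + b * ξ * ‖y - z‖ ^ (-ξ - 2)) • innerSL ℝ (y - z)) y := by
  have hsq : HasFDerivAt (fun x : E ↦ ‖x - z‖ ^ 2) (2 • innerSL ℝ (y - z)) y :=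
    (hasFDerivAt_comp_sub z).2 (hasStrictFDerivAt_norm_sq _).hasFDerivAt
  refine (((hsq.const_mul (-a)).sub ((hasFDerivAt_norm_sub_rpow (-ξ) hy).const_mul b)).add_const
    c).congr_fderiv ?_
  module

theorem fderiv_fderiv_radialBarrier_apply (a b c ξ : ℝ) {x z : E} (hx : x ≠ z) (σ : E) :
    fderiv ℝ (fderiv ℝ (radialBarrier a b c ξ z)) x σ σ =
      (-2 * a + b * ξ * ‖x - z‖ ^ (-ξ - 2)) * ‖σ‖ ^ 2
        - b * ξ * (ξ + 2) * ‖x - z‖ ^ (-ξ - 4) * ⟪x - z, σ⟫ ^ 2 := by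
  have hgrad : fderiv ℝ (radialBarrier a b c ξ z) =ᶠ[nhds x]
      fun y ↦ (-2 * a + b * ξ * ‖y - z‖ ^ (-ξ - 2)) • innerSL ℝ (y - z) := by
    filter_upwards [isOpen_ne.mem_nhds hx] with y hy
    exact (hasFDerivAt_radialBarrier a b c ξ hy).fderiv
  have hcoeff := ((hasFDerivAt_norm_sub_rpow (-ξ - 2) hx).const_mul (b * ξ)).const_add (-2 * a)
  have hinner : HasFDerivAt (fun y : E ↦ innerSL ℝ (y - z)) (innerSL ℝ) x :=
    (hasFDerivAt_comp_sub z).2 (innerSL ℝ).hasFDerivAt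
  have hhess : HasFDerivAt
      (fun y : E ↦ (-2 * a + b * ξ * ‖y - z‖ ^ (-ξ - 2)) • innerSL ℝ (y - z)) _ x :=
    hcoeff.smul hinner
  rw [hgrad.fderiv_eq, hhess.fderiv]
  simp only [add_apply, smul_apply, ContinuousLinearMap.smulRight_apply, innerSL_apply_apply,
    smul_eq_mul]
  rw [show innerSL ℝ σ σ = ‖σ‖ ^ 2 from real_inner_self_eq_norm_sq σ,
    show -ξ - 2 - 2 = -ξ - 4 by ring]
  ring

theorem exists_norm_eq_one_inner_eq_zero [FiniteDimensional ℝ E]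
    (hE : 2 ≤ Module.finrank ℝ E) (v : E) : ∃ σ : E, ‖σ‖ = 1 ∧ ⟪v, σ⟫ = 0 := by
  have hspan : Module.finrank ℝ (ℝ ∙ v) ≤ 1 := by
    simpa using finrank_span_le_card ({v} : Set E)
  have hperp : (ℝ ∙ v)ᗮ ≠ ⊥ := by
    rw [← Submodule.one_le_finrank_iff]
    have := (ℝ ∙ v).finrank_add_finrank_orthogonal
    omega
  obtain ⟨w, hw, hw0⟩ := Submodule.exists_mem_ne_zero_of_ne_bot hperp
  refine ⟨‖w‖⁻¹ • w, norm_smul_inv_norm hw0, ?_⟩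
  rw [real_inner_smul_right,
    Submodule.inner_right_of_mem_orthogonal (Submodule.mem_span_singleton_self v) hw, mul_zero]

theorem ciSup_sphere_mul_norm_sq_sub_mul_inner_sq [FiniteDimensional ℝ E]
    (hE : 2 ≤ Module.finrank ℝ E) (M : ℝ) {K : ℝ} (hK : 0 ≤ K) (v : E) :
    ⨆ σ : sphere (0 : E) 1, M * ‖(σ : E)‖ ^ 2 - K * ⟪v, σ⟫ ^ 2 = M := by
  obtain ⟨σ₀, hσ₀, hvσ₀⟩ := exists_norm_eq_one_inner_eq_zero hE v
  refine IsGreatest.csSup_eq ⟨⟨⟨σ₀, by simpa using hσ₀⟩, by simp [hσ₀, hvσ₀]⟩, ?_⟩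
  rintro _ ⟨σ, rfl⟩
  have hσ : ‖(σ : E)‖ = 1 := by simp
  simp only [hσ]
  nlinarith [sq_nonneg ⟪v, σ⟫]

end

theorem barrier_largest_eigenvalue_general
    (n : ℕ) (hn : 2 ≤ n) (p : ℝ) (hp : 2 < p)
    (z : EuclideanSpace ℝ (Fin n)) (a b c : ℝ) (hb : 0 < b)
    (x : EuclideanSpace ℝ (Fin n)) (hx : x ≠ z) :
    (⨆ σ : sphere (0 : EuclideanSpace ℝ (Fin n)) 1,
      fderiv ℝ (fderiv ℝ (fun x : EuclideanSpace ℝ (Fin n) =>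
        -a * ‖x - z‖ ^ 2 - b * ‖x - z‖ ^ (-((n : ℝ) + p - 4)) + c)) x
        (σ : EuclideanSpace ℝ (Fin n)) (σ : EuclideanSpace ℝ (Fin n))) =
      -2 * a + b * ((n : ℝ) + p - 4) * ‖x - z‖ ^ (-((n : ℝ) + p - 4) - 2) := by
  set ξ : ℝ := (n : ℝ) + p - 4
  have hξ : 0 < ξ := by
    have : (2 : ℝ) ≤ n := by exact_mod_cast hn
    linarith
  have hK : 0 ≤ b * ξ * (ξ + 2) * ‖x - z‖ ^ (-ξ - 4) := by positivity
  change (⨆ σ : sphere (0 : EuclideanSpace ℝ (Fin n)) 1,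
    fderiv ℝ (fderiv ℝ (radialBarrier a b c ξ z)) x σ σ) = _
  simp_rw [fderiv_fderiv_radialBarrier_apply a b c ξ hx]
  exact ciSup_sphere_mul_norm_sq_sub_mul_inner_sq (by simpa using hn) _ hK _

/-- **Largest Hessian eigenvalue of the radial barrier.** For `ξ = n + p − 4 > 0` and
`w(x) = −a|x−z|² − b|x−z|^{−ξ} + c`, for all `x ≠ z` one has
`sup_{|σ|=1} ⟨D²w(x)σ, σ⟩ = −2a + bξ|x−z|^{−ξ−2}`. -/
theorem barrier_largest_eigenvalue
    (n : ℕ) (hn : 2 ≤ n) (p : ℝ) (hp : 2 < p)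
    (z : EuclideanSpace ℝ (Fin n)) (a b c : ℝ) (ha : 0 < a) (hb : 0 < b)
    (x : EuclideanSpace ℝ (Fin n)) (hx : x ≠ z) :
    (⨆ σ : sphere (0 : EuclideanSpace ℝ (Fin n)) 1,
      fderiv ℝ (fderiv ℝ (fun x : EuclideanSpace ℝ (Fin n) =>
        -a * ‖x - z‖ ^ 2 - b * ‖x - z‖ ^ (-((n : ℝ) + p - 4)) + c)) x
        (σ : EuclideanSpace ℝ (Fin n)) (σ : EuclideanSpace ℝ (Fin n))) =
      -2 * a + b * ((n : ℝ) + p - 4) * ‖x - z‖ ^ (-((n : ℝ) + p - 4) - 2) :=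
  barrier_largest_eigenvalue_general n hn p hp z a b c hb x hx
end
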